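/- Let n ≥ 2, f > 0, and λ₁ ≥ ... ≥ λₙ with λₙ < 0 satisfy Σᵢ arctan(λᵢ/f) ≥ (n-2)π/2. Then for any real numbers x₁,...,x_{n-1} with xₙ := -(x₁ + ... + x_{n-1}), one has Σᵢ₌₁ⁿ λᵢ xᵢ² ≥ 0. -/
import Mathlib


open Real Finset

lemma my_arctan_add_le {a b : ℝ} (ha : 0 ≤ a) (hb : 0 ≤ b) :
    Real.arctan (a + b) ≤ Real.arctan a + Real.arctan b := by
  rcases lt_or_ge (a * b) 1 with h | h
  · rw [Real.arctan_add h]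
    apply Real.arctan_strictMono.monotone
    have h1 : 0 < 1 - a * b := by linarith
    rw [le_div_iff₀ h1]
    nlinarith [mul_nonneg (mul_nonneg ha hb) (add_nonneg ha hb)]
  · have ha' : 0 < a := by nlinarith
    have hb' : 0 < b := by nlinarith
    have h1 : a⁻¹ ≤ b := by
      rw [inv_le_iff_one_le_mul₀' ha']
      nlinarith
    have h2 := Real.arctan_strictMono.monotone h1
    rw [Real.arctan_inv_of_pos ha'] at h2
    have := Real.arctan_lt_pi_div_two (a + b)
    linarith

lemma my_arctan_sum_le {ι : Type*} (s : Finset ι) (t : ι → ℝ) (ht : ∀ i ∈ s, 0 ≤ t i) :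
    Real.arctan (∑ i ∈ s, t i) ≤ ∑ i ∈ s, Real.arctan (t i) := by
  induction s using Finset.cons_induction with
  | empty => simp
  | cons a s has ih =>
    rw [Finset.sum_cons, Finset.sum_cons]
    have h1 := my_arctan_add_le (ht a (Finset.mem_cons_self a s))
      (Finset.sum_nonneg fun i hi => ht i (Finset.mem_cons_of_mem hi))
    have h2 := ih fun i hi => ht i (Finset.mem_cons_of_mem hi)
    linarith

theorem stmt_4 (n : ℕ) (hn : 2 ≤ n) (f : ℝ) (hf : 0 < f)
    (lam : Fin n → ℝ) (hmono : Antitone lam)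
    (hsum : ((n : ℝ) - 2) * Real.pi / 2 ≤ ∑ i, Real.arctan (lam i / f))
    (hneg : lam ⟨n - 1, by omega⟩ < 0)
    (x : Fin n → ℝ) (hx : ∑ i, x i = 0) :
    0 ≤ ∑ i, lam i * (x i) ^ 2 := by
  set L : Fin n := ⟨n - 1, by omega⟩ with hL
  set s : Finset (Fin n) := Finset.univ.erase L with hs
  have hfne : f ≠ 0 := ne_of_gt hf
  have hLneg : Real.arctan (lam L / f) < 0 := by
    calc Real.arctan (lam L / f) < Real.arctan 0 :=
          Real.arctan_strictMono (div_neg_of_neg_of_pos hneg hf)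
      _ = 0 := Real.arctan_zero
  -- positivity of lam on s
  have hpos : ∀ i ∈ s, 0 < lam i := by
    intro i hi
    have hiL : i ≠ L := Finset.ne_of_mem_erase hi
    have hLmem : L ∈ Finset.univ.erase i := by
      simp [Ne.symm hiL]
    have e1 : (∑ j ∈ Finset.univ.erase i, Real.arctan (lam j / f))
        + Real.arctan (lam i / f) = ∑ j, Real.arctan (lam j / f) :=
      Finset.sum_erase_add _ _ (Finset.mem_univ i)
    have e2 : (∑ j ∈ (Finset.univ.erase i).erase L, Real.arctan (lam j / f))
        + Real.arctan (lam L / f) = ∑ j ∈ Finset.univ.erase i, Real.arctan (lam j / f) :=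
      Finset.sum_erase_add _ _ hLmem
    have hcard : ((Finset.univ.erase i).erase L).card = n - 2 := by
      rw [Finset.card_erase_of_mem hLmem, Finset.card_erase_of_mem (Finset.mem_univ i)]
      simp
      omega
    have hbound : (∑ j ∈ (Finset.univ.erase i).erase L, Real.arctan (lam j / f))
        ≤ ((n : ℝ) - 2) * (Real.pi / 2) := by
      have := Finset.sum_le_card_nsmul ((Finset.univ.erase i).erase L)
        (fun j => Real.arctan (lam j / f)) (Real.pi / 2)
        (fun j _ => (Real.arctan_lt_pi_div_two _).le)
      rw [hcard, nsmul_eq_mul] at this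
      have hc : ((n - 2 : ℕ) : ℝ) = (n : ℝ) - 2 := by
        have : (2 : ℕ) ≤ n := hn
        push_cast [Nat.cast_sub this]
        ring
      rwa [hc] at this
    have hgt : 0 < Real.arctan (lam i / f) := by
      have hs' : ((n : ℝ) - 2) * Real.pi / 2 = ((n : ℝ) - 2) * (Real.pi / 2) := by ring
      rw [hs'] at hsum
      linarith [hsum, e1.symm, e2.symm]
    have : (0 : ℝ) < lam i / f := by
      by_contra h
      push_neg at h
      have := Real.arctan_strictMono.monotone h
      rw [Real.arctan_zero] at this
      linarith
    have := mul_pos this hf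
    rwa [div_mul_cancel₀ _ hfne] at this
  -- rewrite the arctan sum
  have e1 : (∑ i ∈ s, Real.arctan (lam i / f)) + Real.arctan (lam L / f)
      = ∑ i, Real.arctan (lam i / f) :=
    Finset.sum_erase_add _ _ (Finset.mem_univ L)
  have hflip : ∀ i ∈ s, Real.arctan (lam i / f) = Real.pi / 2 - Real.arctan (f / lam i) := by
    intro i hi
    have h1 : 0 < lam i / f := div_pos (hpos i hi) hf
    have := Real.arctan_inv_of_pos h1
    rw [inv_div] at this
    linarith [this]
  have hscard : (s : Finset (Fin n)).card = n - 1 := by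
    rw [hs, Finset.card_erase_of_mem (Finset.mem_univ L)]
    simp
  have e3 : (∑ i ∈ s, Real.arctan (lam i / f))
      = ((n : ℝ) - 1) * (Real.pi / 2) - ∑ i ∈ s, Real.arctan (f / lam i) := by
    rw [Finset.sum_congr rfl hflip, Finset.sum_sub_distrib, Finset.sum_const, hscard,
      nsmul_eq_mul]
    have hc : ((n - 1 : ℕ) : ℝ) = (n : ℝ) - 1 := by
      have : (1 : ℕ) ≤ n := by omega
      push_cast [Nat.cast_sub this]
      ring
    rw [hc]
  -- T ≤ arctan (f / (-lam L))
  have hB : Real.arctan (f / (-lam L)) = Real.pi / 2 + Real.arctan (lam L / f) := by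
    have h1 : 0 < -lam L / f := div_pos (neg_pos.mpr hneg) hf
    have := Real.arctan_inv_of_pos h1
    rw [inv_div] at this
    rw [this, neg_div, Real.arctan_neg]
    ring
  have hT : (∑ i ∈ s, Real.arctan (f / lam i)) ≤ Real.arctan (f / (-lam L)) := by
    rw [hB]
    have hs' : ((n : ℝ) - 2) * Real.pi / 2 = ((n : ℝ) - 2) * (Real.pi / 2) := by ring
    rw [hs'] at hsum
    rw [← e1, e3] at hsum
    linarith
  -- sum of reciprocals bound
  have hrecip : (∑ i ∈ s, f / lam i) ≤ f / (-lam L) := by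
    have h1 : Real.arctan (∑ i ∈ s, f / lam i) ≤ Real.arctan (f / (-lam L)) :=
      le_trans (my_arctan_sum_le s _ (fun i hi => (div_pos hf (hpos i hi)).le)) hT
    exact (Real.arctan_strictMono.le_iff_le).mp h1
  have hS : (∑ i ∈ s, (lam i)⁻¹) ≤ (-lam L)⁻¹ := by
    have : f * (∑ i ∈ s, (lam i)⁻¹) ≤ f * (-lam L)⁻¹ := by
      rw [Finset.mul_sum] at *
      simpa [div_eq_mul_inv] using hrecip
    exact le_of_mul_le_mul_left this hf
  have hsne : s.Nonempty := by
    refine ⟨⟨0, by omega⟩, ?_⟩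
    rw [hs, Finset.mem_erase]
    refine ⟨?_, Finset.mem_univ _⟩
    intro h
    have := congrArg Fin.val h
    simp [hL] at this
    omega
  have hSpos : 0 < ∑ i ∈ s, (lam i)⁻¹ :=
    Finset.sum_pos (fun i hi => inv_pos.mpr (hpos i hi)) hsne
  -- Cauchy-Schwarz / Sedrakyan
  have hCS : (∑ i ∈ s, x i) ^ 2 / (∑ i ∈ s, (lam i)⁻¹) ≤ ∑ i ∈ s, lam i * (x i) ^ 2 := by
    have := Finset.sq_sum_div_le_sum_sq_div s x
      (g := fun i => (lam i)⁻¹) (fun i hi => inv_pos.mpr (hpos i hi))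
    calc (∑ i ∈ s, x i) ^ 2 / (∑ i ∈ s, (lam i)⁻¹)
        ≤ ∑ i ∈ s, (x i) ^ 2 / (lam i)⁻¹ := this
      _ = ∑ i ∈ s, lam i * (x i) ^ 2 := by
          apply Finset.sum_congr rfl
          intro i hi
          rw [div_eq_mul_inv, inv_inv, mul_comm]
  have hxL : (∑ i ∈ s, x i) = -x L := by
    have := Finset.sum_erase_add Finset.univ x (Finset.mem_univ L)
    rw [hx] at this
    linarith
  have hsplit : (∑ i ∈ s, lam i * (x i) ^ 2) + lam L * (x L) ^ 2
      = ∑ i, lam i * (x i) ^ 2 :=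
    Finset.sum_erase_add _ _ (Finset.mem_univ L)
  have hkey : (x L) ^ 2 * (-lam L) ≤ ∑ i ∈ s, lam i * (x i) ^ 2 := by
    have h1 : (x L) ^ 2 / (-lam L)⁻¹ ≤ (x L) ^ 2 / (∑ i ∈ s, (lam i)⁻¹) :=
      div_le_div_of_nonneg_left (sq_nonneg _) hSpos hS
    have h2 : (x L) ^ 2 / (-lam L)⁻¹ = (x L) ^ 2 * (-lam L) := by
      rw [div_eq_mul_inv, inv_inv]
    rw [hxL] at hCS
    rw [neg_pow] at hCS
    simp at hCS
    calc (x L) ^ 2 * (-lam L) = (x L) ^ 2 / (-lam L)⁻¹ := h2.symm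
      _ ≤ (x L) ^ 2 / (∑ i ∈ s, (lam i)⁻¹) := h1
      _ ≤ ∑ i ∈ s, lam i * (x i) ^ 2 := hCS
  rw [← hsplit]
  nlinarith [hkey]
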